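/- arXiv:2301.00473 — 2 statements merged into one kernel-verified Lean document; each statement's English description precedes it below -/
import Mathlib

section
/- Let U ⊆ ℝ^d be a bounded open convex set and let h : U → ℝ be a C² strictly convex function, in the sense that its second real Fréchet derivative D²h(x) is positive definite at every x ∈ U, and assume dh(x) ≠ 0 for every x ∈ U. Set D = {x ∈ U : h(x) < 0} and assume that the boundary of D intersected with U equals {x ∈ U : h(x) = 0}. Then for every compact set L ⊆ ∂D ∩ U and every open neighborhood U_L ⊆ U of L, there exists a C² function h̃ : U → ℝ with positive definite second derivative at every point of U, satisfying h̃ ≤ h on U, such that the set D̃ = {x ∈ U : h̃(x) < 0} is convex, D ∪ L ⊆ D̃ ⊆ D ∪ U_L, and dh̃(x) ≠ 0 for every x in the boundary of D̃ intersected with U. (Lemma 2.7 of the paper, where it is stated for U ⊆ ℂ^n ≅ ℝ^{2n}; strict convexity there means positive real Hessian.) -/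
open Set
open scoped Manifold

section Aux

variable {E : Type*} [NormedAddCommGroup E] [NormedSpace ℝ E]

private lemma line_hasDerivAt (x v : E) (t : ℝ) :
    HasDerivAt (fun s : ℝ => x + s • v) v t := by
  simpa using ((hasDerivAt_id t).smul_const v).const_add x

private lemma second_eq {U : Set E} (hUo : IsOpen U) {f : E → ℝ} {x : E} (hx : x ∈ U) (v w : E) :
    fderiv ℝ (fderiv ℝ f) x v w = iteratedFDerivWithin ℝ 2 f U x ![v, w] := by
  rw [iteratedFDerivWithin_two_apply f hUo.uniqueDiffOn hx]
  simp only [Matrix.cons_val_zero, Matrix.cons_val_one, Matrix.head_cons]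
  rw [fderivWithin_of_isOpen hUo hx]
  have : fderivWithin ℝ f U =ᶠ[nhds x] fderiv ℝ f := by
    filter_upwards [hUo.mem_nhds hx] with z hz
    exact fderivWithin_of_isOpen hUo hz
  rw [this.fderiv_eq]

private lemma convexOn_of_second_nonneg {U : Set E} (hUo : IsOpen U) (hUc : Convex ℝ U)
    {f : E → ℝ} (hf : ContDiffOn ℝ 2 f U)
    (hpos : ∀ x ∈ U, ∀ v : E, 0 ≤ fderiv ℝ (fderiv ℝ f) x v v) :
    ConvexOn ℝ U f := by
  have hf1 : ContDiffOn ℝ 1 (fderiv ℝ f) U := hf.fderiv_of_isOpen hUo (by norm_num)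
  refine ⟨hUc, ?_⟩
  intro x hx y hy a b ha hb hab
  set γ : ℝ → E := fun t => x + t • (y - x) with hγ
  have hmem : ∀ t ∈ Icc (0:ℝ) 1, γ t ∈ U := by
    intro t ht
    have hid : γ t = (1 - t) • x + t • y := by simp only [hγ]; module
    rw [hid]
    exact hUc hx hy (by linarith [ht.2]) ht.1 (by ring)
  have hmemo : ∀ t ∈ interior (Icc (0:ℝ) 1), γ t ∈ U := fun t ht => hmem t (interior_subset ht)
  have hγc : Continuous γ := by fun_prop
  have hg0 : ContinuousOn (f ∘ γ) (Icc 0 1) := hf.continuousOn.comp hγc.continuousOn hmem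
  have hd1 : ∀ t ∈ interior (Icc (0:ℝ) 1),
      HasDerivWithinAt (f ∘ γ) (fderiv ℝ f (γ t) (y - x)) (interior (Icc 0 1)) t := by
    intro t ht
    have hU' := hmemo t ht
    have hdf : DifferentiableAt ℝ f (γ t) :=
      (hf.contDiffAt (hUo.mem_nhds hU')).differentiableAt two_ne_zero
    exact (hdf.hasFDerivAt.comp_hasDerivAt t (line_hasDerivAt x (y - x) t)).hasDerivWithinAt
  have hd2 : ∀ t ∈ interior (Icc (0:ℝ) 1),
      HasDerivWithinAt (fun s => fderiv ℝ f (γ s) (y - x))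
      (fderiv ℝ (fderiv ℝ f) (γ t) (y - x) (y - x)) (interior (Icc 0 1)) t := by
    intro t ht
    have hU' := hmemo t ht
    have hdf1 : DifferentiableAt ℝ (fderiv ℝ f) (γ t) :=
      (hf1.contDiffAt (hUo.mem_nhds hU')).differentiableAt one_ne_zero
    have hA := (ContinuousLinearMap.apply ℝ ℝ (y - x)).hasFDerivAt (x := fderiv ℝ f (γ t))
    have hcomp := (hA.comp (γ t) hdf1.hasFDerivAt).comp_hasDerivAt t (line_hasDerivAt x (y - x) t)
    exact hcomp.hasDerivWithinAt
  have hgconv : ConvexOn ℝ (Icc (0:ℝ) 1) (f ∘ γ) :=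
    convexOn_of_hasDerivWithinAt2_nonneg (convex_Icc 0 1) hg0 hd1 hd2
      (fun t ht => hpos _ (hmemo t ht) _)
  have key := hgconv.2 (left_mem_Icc.2 zero_le_one) (right_mem_Icc.2 zero_le_one) ha hb hab
  have e0 : γ 0 = x := by simp [hγ]
  have e1 : γ 1 = y := by simp [hγ]
  have eb : γ (a • (0:ℝ) + b • 1) = a • x + b • y := by
    have hA : a = 1 - b := by linarith
    subst hA
    simp only [hγ, smul_eq_mul, mul_zero, mul_one, zero_add]
    module
  simpa only [Function.comp, e0, e1, eb] using key

end Aux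

set_option maxHeartbeats 1000000 in
/-- Lemma 2.7: enlarging a strictly convex sublevel set `D = {h < 0}` across a compact
part `L` of its boundary, staying inside `D ∪ U_L`. -/
theorem enlarge_strictly_convex_domain
    {d : ℕ} (U : Set (EuclideanSpace ℝ (Fin d))) (hUopen : IsOpen U)
    (hUbdd : Bornology.IsBounded U) (hUconv : Convex ℝ U)
    (h : EuclideanSpace ℝ (Fin d) → ℝ) (hh : ContDiffOn ℝ 2 h U)
    (hconv : ∀ x ∈ U, ∀ v : EuclideanSpace ℝ (Fin d), v ≠ 0 →
      0 < iteratedFDerivWithin ℝ 2 h U x ![v, v])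
    (hdh : ∀ x ∈ U, fderivWithin ℝ h U x ≠ 0)
    (D : Set (EuclideanSpace ℝ (Fin d))) (hD : D = {x ∈ U | h x < 0})
    (hbdry : frontier D ∩ U = {x ∈ U | h x = 0})
    (L : Set (EuclideanSpace ℝ (Fin d))) (hL : IsCompact L) (hLsub : L ⊆ frontier D ∩ U)
    (UL : Set (EuclideanSpace ℝ (Fin d))) (hUL : IsOpen UL) (hLUL : L ⊆ UL) (hULU : UL ⊆ U) :
    ∃ htil : EuclideanSpace ℝ (Fin d) → ℝ,
      ContDiffOn ℝ 2 htil U ∧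
      (∀ x ∈ U, ∀ v : EuclideanSpace ℝ (Fin d), v ≠ 0 →
        0 < iteratedFDerivWithin ℝ 2 htil U x ![v, v]) ∧
      (∀ x ∈ U, htil x ≤ h x) ∧
      Convex ℝ {x ∈ U | htil x < 0} ∧
      D ∪ L ⊆ {x ∈ U | htil x < 0} ∧
      {x ∈ U | htil x < 0} ⊆ D ∪ UL ∧
      (∀ x ∈ frontier {x ∈ U | htil x < 0} ∩ U, fderivWithin ℝ htil U x ≠ 0) := by
  classical
  have hUD : UniqueDiffOn ℝ U := hUopen.uniqueDiffOn
  -- a compact set `K` squeezed between `L` and `UL`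
  obtain ⟨K, hKc, hLK, hKUL⟩ := exists_compact_between hL hUL hLUL
  have hKU : K ⊆ U := hKUL.trans hULU
  -- a smooth bump function
  obtain ⟨χ₀, hχnhds1, hχout, hχ01⟩ :=
    exists_contMDiffMap_one_nhds_of_subset_interior (𝓘(ℝ, (EuclideanSpace ℝ (Fin d)))) (n := 2) hL.isClosed hLK
  set χ : (EuclideanSpace ℝ (Fin d)) → ℝ := ⇑χ₀ with hχdef
  have hχsm : ContDiff ℝ 2 χ :=
    (contMDiff_iff_contDiff.1 χ₀.contMDiff).of_le (by first
      | exact_mod_cast (le_top : (2:ℕ∞) ≤ ⊤)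
      | exact WithTop.coe_le_coe.2 le_top
      | simp)
  have hχ1 : ∀ x ∈ L, χ x = 1 := fun x hx => hχnhds1.self_of_nhdsSet x hx
  have hχ0 : ∀ x ∉ K, χ x = 0 := hχout
  have hχnonneg : ∀ x, 0 ≤ χ x := fun x => (hχ01 x).1
  have hχsupp : ∀ x ∉ K, iteratedFDeriv ℝ 2 χ x = 0 := by
    intro x hx
    have htsub : tsupport χ ⊆ K := by
      apply closure_minimal _ hKc.isClosed
      intro z hz
      by_contra hzK
      exact hz (hχ0 z hzK)
    have : x ∉ tsupport (iteratedFDeriv ℝ 2 χ) :=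
      fun hmem => hx (htsub (tsupport_iteratedFDeriv_subset 2 hmem))
    exact image_eq_zero_of_notMem_tsupport this
  -- choose ε by compactness
  have hHcont : ContinuousOn (iteratedFDerivWithin ℝ 2 h U) U :=
    hh.continuousOn_iteratedFDerivWithin (by exact_mod_cast le_refl (2:ℕ∞)) hUD
  have hQcont : Continuous (iteratedFDeriv ℝ 2 χ) :=
    hχsm.continuous_iteratedFDeriv (le_refl _)
  obtain ⟨ε, hε, hεle⟩ : ∃ ε > (0:ℝ), ∀ x ∈ K, ∀ u : (EuclideanSpace ℝ (Fin d)), ‖u‖ = 1 →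
      ε * (1 + ‖iteratedFDeriv ℝ 2 χ x‖) ≤ iteratedFDerivWithin ℝ 2 h U x ![u, u] := by
    set T : Set ((EuclideanSpace ℝ (Fin d)) × (EuclideanSpace ℝ (Fin d))) := K ×ˢ Metric.sphere (0:(EuclideanSpace ℝ (Fin d))) 1 with hT
    rcases T.eq_empty_or_nonempty with hTe | hTne
    · refine ⟨1, one_pos, fun x hx u hu => absurd ?_ (hTe ▸ Set.notMem_empty (x, u))⟩
      exact Set.mk_mem_prod hx (by simpa [Metric.mem_sphere, dist_eq_norm] using hu)
    · have hTc : IsCompact T := hKc.prod (isCompact_sphere _ _)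
      set ρ : (EuclideanSpace ℝ (Fin d)) × (EuclideanSpace ℝ (Fin d)) → ℝ := fun p =>
        iteratedFDerivWithin ℝ 2 h U p.1 ![p.2, p.2] / (1 + ‖iteratedFDeriv ℝ 2 χ p.1‖) with hρ
      have hρcont : ContinuousOn ρ T := by
        apply ContinuousOn.div
        · have h1 : ContinuousOn (fun p : (EuclideanSpace ℝ (Fin d)) × (EuclideanSpace ℝ (Fin d)) => iteratedFDerivWithin ℝ 2 h U p.1) T := by
            apply hHcont.comp continuousOn_fst
            intro p hp
            exact hKU hp.1
          have h2 : Continuous (fun p : (EuclideanSpace ℝ (Fin d)) × (EuclideanSpace ℝ (Fin d)) => (![p.2, p.2] : Fin 2 → (EuclideanSpace ℝ (Fin d)))) := by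
            apply continuous_pi
            intro i
            fin_cases i <;> simpa using continuous_snd
          exact continuous_eval.comp_continuousOn (h1.prodMk h2.continuousOn)
        · fun_prop
        · intro p _
          positivity
      obtain ⟨p₀, hp₀T, hp₀min⟩ := hTc.exists_isMinOn hTne hρcont
      have hp₀U : p₀.1 ∈ U := hKU hp₀T.1
      have hp₀u : p₀.2 ≠ 0 := by
        have : ‖p₀.2‖ = 1 := by simpa [dist_eq_norm] using hp₀T.2
        intro h0
        rw [h0] at this; simp at this
      have hnum : 0 < iteratedFDerivWithin ℝ 2 h U p₀.1 ![p₀.2, p₀.2] :=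
        hconv _ hp₀U _ hp₀u
      have hden : (0:ℝ) < 1 + ‖iteratedFDeriv ℝ 2 χ p₀.1‖ := by positivity
      refine ⟨ρ p₀, div_pos hnum hden, fun x hx u hu => ?_⟩
      have hmemT : (x, u) ∈ T :=
        Set.mk_mem_prod hx (by simpa [Metric.mem_sphere, dist_eq_norm] using hu)
      have := hp₀min hmemT
      have hdenx : (0:ℝ) < 1 + ‖iteratedFDeriv ℝ 2 χ x‖ := by positivity
      calc ρ p₀ * (1 + ‖iteratedFDeriv ℝ 2 χ x‖)
          ≤ ρ (x, u) * (1 + ‖iteratedFDeriv ℝ 2 χ x‖) := by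
            exact mul_le_mul_of_nonneg_right this hdenx.le
        _ = iteratedFDerivWithin ℝ 2 h U x ![u, u] := by
            simp only [hρ]
            field_simp
  -- the new function
  set htil : (EuclideanSpace ℝ (Fin d)) → ℝ := fun z => h z + (-ε) • χ z with hhtil
  have hχ2 : ContDiffOn ℝ 2 (fun z => (-ε) • χ z) U := ((hχsm.const_smul (-ε)).contDiffOn)
  have hhtilC : ContDiffOn ℝ 2 htil U := hh.add hχ2
  -- second derivative formula
  have hsecond : ∀ x ∈ U, ∀ m : Fin 2 → (EuclideanSpace ℝ (Fin d)),
      iteratedFDerivWithin ℝ 2 htil U x m =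
        iteratedFDerivWithin ℝ 2 h U x m + (-ε) • iteratedFDeriv ℝ 2 χ x m := by
    intro x hx m
    have hadd := iteratedFDerivWithin_add_apply' (i := 2) (hh x hx) (hχ2 x hx) hUD hx
    rw [hhtil, hadd]
    have heq : (fun z => (-ε) • χ z) = (-ε) • χ := rfl
    have hsm : iteratedFDerivWithin ℝ 2 (fun z => (-ε) • χ z) U x
        = (-ε) • iteratedFDerivWithin ℝ 2 χ U x := by
      rw [heq]
      exact iteratedFDerivWithin_const_smul_apply (hχsm.contDiffWithinAt) hUD hx
    have hop : iteratedFDerivWithin ℝ 2 χ U x = iteratedFDeriv ℝ 2 χ x :=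
      iteratedFDerivWithin_of_isOpen 2 hUopen hx
    rw [hsm]
    simp [hop]
  -- strict positivity of the second derivative
  have hkey : ∀ x ∈ U, ∀ u : (EuclideanSpace ℝ (Fin d)), ‖u‖ = 1 → 0 < iteratedFDerivWithin ℝ 2 htil U x ![u, u] := by
    intro x hx u hu
    have hune : u ≠ 0 := by intro h0; rw [h0] at hu; simp at hu
    rw [hsecond x hx]
    by_cases hxK : x ∈ K
    · have hb := hεle x hxK u hu
      have hQ : |iteratedFDeriv ℝ 2 χ x ![u, u]| ≤ ‖iteratedFDeriv ℝ 2 χ x‖ := by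
        have := (iteratedFDeriv ℝ 2 χ x).le_opNorm ![u, u]
        have hprod : (∏ i : Fin 2, ‖(![u, u] : Fin 2 → (EuclideanSpace ℝ (Fin d))) i‖) = 1 := by
          simp [Fin.prod_univ_two, hu]
        rw [hprod, mul_one] at this
        simpa using this
      have habs := abs_le.1 hQ
      have : ε * ‖iteratedFDeriv ℝ 2 χ x‖ < ε * (1 + ‖iteratedFDeriv ℝ 2 χ x‖) := by nlinarith
      simp only [smul_eq_mul, Pi.add_apply]
      nlinarith [habs.2, habs.1]
    · rw [hχsupp x hxK]
      simpa using hconv x hx u hune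
  have hpos : ∀ x ∈ U, ∀ v : (EuclideanSpace ℝ (Fin d)), v ≠ 0 → 0 < iteratedFDerivWithin ℝ 2 htil U x ![v, v] := by
    intro x hx v hv
    set u : (EuclideanSpace ℝ (Fin d)) := ‖v‖⁻¹ • v with hudef
    have hvnorm : ‖v‖ ≠ 0 := norm_ne_zero_iff.2 hv
    have hu : ‖u‖ = 1 := by
      rw [hudef, norm_smul]
      simp [abs_of_nonneg (inv_nonneg.2 (norm_nonneg v)), inv_mul_cancel₀ hvnorm]
    have hscale : (![v, v] : Fin 2 → (EuclideanSpace ℝ (Fin d))) = fun i => ‖v‖ • (![u, u] : Fin 2 → (EuclideanSpace ℝ (Fin d))) i := by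
      funext i
      fin_cases i <;> simp [hudef, smul_smul, mul_inv_cancel₀ hvnorm]
    rw [hscale, (iteratedFDerivWithin ℝ 2 htil U x).map_smul_univ]
    have h2 : (0:ℝ) < ∏ _i : Fin 2, ‖v‖ := by
      rw [Fin.prod_univ_two]
      positivity
    have := hkey x hx u hu
    simpa [smul_eq_mul] using mul_pos h2 this
  -- htil ≤ h
  have hle : ∀ x ∈ U, htil x ≤ h x := by
    intro x _
    have := hχnonneg x
    simp only [hhtil, smul_eq_mul]
    nlinarith
  -- convexity
  have hfderiv2 : ∀ x ∈ U, ∀ v : (EuclideanSpace ℝ (Fin d)), 0 ≤ fderiv ℝ (fderiv ℝ htil) x v v := by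
    intro x hx v
    rcases eq_or_ne v 0 with rfl | hv
    · simp
    · rw [second_eq hUopen hx]
      exact (hpos x hx v hv).le
  have hconvOn : ConvexOn ℝ U htil := convexOn_of_second_nonneg hUopen hUconv hhtilC hfderiv2
  have hconvSet : Convex ℝ {x ∈ U | htil x < 0} := hconvOn.convex_lt 0
  -- continuity of htil on U
  have hcontOn : ContinuousOn htil U := hhtilC.continuousOn
  -- D̃ is open
  have hDtopen : IsOpen {x ∈ U | htil x < 0} := by
    have : {x ∈ U | htil x < 0} = U ∩ htil ⁻¹' Iio 0 := by
      ext z; simp [Set.mem_sep_iff]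
    rw [this]
    exact hcontOn.isOpen_inter_preimage hUopen isOpen_Iio
  refine ⟨htil, hhtilC, hpos, hle, hconvSet, ?_, ?_, ?_⟩
  · -- D ∪ L ⊆ D̃
    rintro x (hx | hx)
    · rw [hD] at hx
      refine ⟨hx.1, lt_of_le_of_lt (hle x hx.1) hx.2⟩
    · have hxU : x ∈ U := (hLsub hx).2
      have hx0 : h x = 0 := by
        have := hbdry ▸ (hLsub hx)
        exact this.2
      refine ⟨hxU, ?_⟩
      simp only [hhtil, smul_eq_mul, hx0, hχ1 x hx]
      linarith
  · -- D̃ ⊆ D ∪ UL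
    rintro x ⟨hxU, hxlt⟩
    by_cases hxh : h x < 0
    · exact Or.inl (hD ▸ ⟨hxU, hxh⟩)
    · push_neg at hxh
      have : 0 < χ x := by
        by_contra hc
        push_neg at hc
        have : χ x = 0 := le_antisymm hc (hχnonneg x)
        rw [hhtil] at hxlt
        simp only [smul_eq_mul, this, mul_zero, add_zero] at hxlt
        linarith
      have hxK : x ∈ K := by
        by_contra hxK
        rw [hχ0 x hxK] at this
        exact lt_irrefl 0 this
      exact Or.inr (hKUL hxK)
  · -- gradient at the boundary
    intro x hx
    obtain ⟨hxfr, hxU⟩ := hx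
    set Dt := {x ∈ U | htil x < 0} with hDt
    rw [hDtopen.frontier_eq] at hxfr
    have hxnot : x ∉ Dt := hxfr.2
    have hxcl : x ∈ closure Dt := hxfr.1
    have hxge : 0 ≤ htil x := by
      by_contra hc
      push_neg at hc
      exact hxnot ⟨hxU, hc⟩
    have hxle : htil x ≤ 0 := by
      have hne : (nhdsWithin x Dt).NeBot := mem_closure_iff_nhdsWithin_neBot.1 hxcl
      have htend : Filter.Tendsto htil (nhdsWithin x Dt) (nhds (htil x)) :=
        ((hcontOn.continuousAt (hUopen.mem_nhds hxU)).continuousWithinAt).tendsto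
      exact le_of_tendsto htend (Filter.eventually_inf_principal.2
        (Filter.Eventually.of_forall fun z hz => hz.2.le))
    have hx0 : htil x = 0 := le_antisymm hxle hxge
    -- pick a point of D̃
    obtain ⟨y, hy⟩ : Dt.Nonempty := by
      rcases Dt.eq_empty_or_nonempty with he | hne
      · rw [he] at hxcl; simp at hxcl
      · exact hne
    have hyU : y ∈ U := hy.1
    have hylt : htil y < 0 := hy.2
    -- derivative of t ↦ htil (x + t (y - x)) at 0
    have hdiff : DifferentiableAt ℝ htil x :=
      (hhtilC.contDiffAt (hUopen.mem_nhds hxU)).differentiableAt two_ne_zero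
    set c : ℝ := fderiv ℝ htil x (y - x) with hc
    set g : ℝ → ℝ := fun t => htil (x + t • (y - x)) with hg
    have hgd : HasDerivAt g c 0 := by
      have hfd : HasFDerivAt htil (fderiv ℝ htil x) (x + (0:ℝ) • (y - x)) := by
        simpa using hdiff.hasFDerivAt
      exact hfd.comp_hasDerivAt 0 (line_hasDerivAt x (y - x) 0)
    have hg0 : g 0 = 0 := by simp [hg, hx0]
    have hslope : ∀ t ∈ Ioo (0:ℝ) 1, g t ≤ t * htil y := by
      intro t ht
      have hconvineq := hconvOn.2 hxU hyU
        (by linarith [ht.2] : (0:ℝ) ≤ 1 - t) ht.1.le (by ring : (1 - t) + t = 1)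
      have hpt : (1 - t) • x + t • y = x + t • (y - x) := by module
      rw [hpt] at hconvineq
      calc g t ≤ (1 - t) • htil x + t • htil y := hconvineq
        _ = t * htil y := by rw [hx0]; simp [smul_eq_mul]
    have hclt : c < 0 := by
      have htends : Filter.Tendsto (slope g 0) (nhdsWithin 0 (Ioi 0)) (nhds c) :=
        (hasDerivAt_iff_tendsto_slope.1 hgd).mono_left
          (nhdsWithin_mono 0 (fun z hz => ne_of_gt hz))
      have hcle : c ≤ htil y := by
        refine le_of_tendsto htends ?_
        filter_upwards [Ioo_mem_nhdsGT_of_mem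
          (Set.mem_Ico.2 ⟨le_refl (0:ℝ), zero_lt_one⟩)] with t ht
        rw [slope_def_field, hg0, sub_zero, sub_zero]
        rw [div_le_iff₀ ht.1]
        calc g t ≤ t * htil y := hslope t ht
          _ = htil y * t := by ring
      linarith
    rw [fderivWithin_of_isOpen hUopen hxU]
    intro h0
    have : c = 0 := by rw [hc, h0]; simp
    linarith
end

section
/- Let U ⊆ ℂ^n be a bounded open set and let ρ : U → ℝ be a C² function whose Levi form is positive definite at every point, i.e., L_ρ(z;ξ) > 0 for every z ∈ U and every nonzero ξ ∈ ℂ^n, and assume dρ(z) ≠ 0 for every z ∈ U. Set D = {z ∈ U : ρ(z) < 0} and assume that the boundary of D intersected with U equals {z ∈ U : ρ(z) = 0}. Then for every compact set L ⊆ ∂D ∩ U and every open neighborhood U_L ⊆ U of L, there exists a C² function ρ̃ : U → ℝ with ρ̃ ≤ ρ on U, whose Levi form is positive definite at every point of U, such that the set D̃ = {z ∈ U : ρ̃(z) < 0} satisfies D ∪ L ⊆ D̃ ⊆ D ∪ U_L and dρ̃(z) ≠ 0 for every z in the boundary of D̃ intersected with U. (The strictly plurisubharmonic analogue of Lemma 2.7,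 asserted in the remark following its proof in the paper.) -/
/-- The Levi form of a `C²` function `u` on `Ω ⊆ ℂ^n` at `z` in direction `ξ`:
`L_u(z;ξ) = (1/4)(D²u(z)(ξ,ξ) + D²u(z)(iξ,iξ))`. -/
noncomputable def leviForm {n : ℕ} (u : EuclideanSpace ℂ (Fin n) → ℝ)
    (Ω : Set (EuclideanSpace ℂ (Fin n))) (z ξ : EuclideanSpace ℂ (Fin n)) : ℝ :=
  (iteratedFDerivWithin ℝ 2 u Ω z ![ξ, ξ]
    + iteratedFDerivWithin ℝ 2 u Ω z ![Complex.I • ξ, Complex.I • ξ]) / 4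

section Aux

variable {n : ℕ}

private lemma leviForm_real_smul (u : EuclideanSpace ℂ (Fin n) → ℝ)
    (Ω : Set (EuclideanSpace ℂ (Fin n))) (z ξ : EuclideanSpace ℂ (Fin n)) (r : ℝ) :
    leviForm u Ω z (r • ξ) = r ^ 2 * leviForm u Ω z ξ := by
  have key : ∀ η : EuclideanSpace ℂ (Fin n),
      iteratedFDerivWithin ℝ 2 u Ω z ![r • η, r • η]
        = r ^ 2 * iteratedFDerivWithin ℝ 2 u Ω z ![η, η] := by
    intro η
    have h : (![r • η, r • η] : Fin 2 → EuclideanSpace ℂ (Fin n))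
        = fun i => (fun _ : Fin 2 => r) i • (![η, η] : Fin 2 → _) i := by
      funext i; fin_cases i <;> simp
    rw [h, ContinuousMultilinearMap.map_smul_univ]
    simp [Finset.prod_const, smul_eq_mul, sq]
  have hI : Complex.I • (r • ξ) = r • (Complex.I • ξ) := smul_comm _ _ _
  unfold leviForm
  rw [hI, key ξ, key (Complex.I • ξ)]
  ring

private lemma leviForm_continuousOn {u : EuclideanSpace ℂ (Fin n) → ℝ}
    {Ω : Set (EuclideanSpace ℂ (Fin n))} (hΩ : IsOpen Ω) (hu : ContDiffOn ℝ 2 u Ω) :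
    ContinuousOn (fun p : EuclideanSpace ℂ (Fin n) × EuclideanSpace ℂ (Fin n) =>
      leviForm u Ω p.1 p.2) (Ω ×ˢ (Set.univ : Set (EuclideanSpace ℂ (Fin n)))) := by
  have h1 : ContinuousOn (iteratedFDerivWithin ℝ 2 u Ω) Ω :=
    hu.continuousOn_iteratedFDerivWithin le_rfl hΩ.uniqueDiffOn
  have h1' : ContinuousOn (fun p : EuclideanSpace ℂ (Fin n) × EuclideanSpace ℂ (Fin n) =>
      iteratedFDerivWithin ℝ 2 u Ω p.1) (Ω ×ˢ (Set.univ : Set (EuclideanSpace ℂ (Fin n)))) :=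
    h1.comp continuous_fst.continuousOn (fun p hp => hp.1)
  have harg : ∀ c : ℂ, Continuous (fun p : EuclideanSpace ℂ (Fin n) × EuclideanSpace ℂ (Fin n) =>
      (![c • p.2, c • p.2] : Fin 2 → EuclideanSpace ℂ (Fin n))) := by
    intro c
    refine continuous_pi fun i => ?_
    fin_cases i <;> simp <;> exact continuous_snd.const_smul c
  have harg1 : Continuous (fun p : EuclideanSpace ℂ (Fin n) × EuclideanSpace ℂ (Fin n) =>
      (![p.2, p.2] : Fin 2 → EuclideanSpace ℂ (Fin n))) := by
    refine continuous_pi fun i => ?_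
    fin_cases i <;> simpa using continuous_snd
  have e1 : ContinuousOn (fun p : EuclideanSpace ℂ (Fin n) × EuclideanSpace ℂ (Fin n) =>
      iteratedFDerivWithin ℝ 2 u Ω p.1 ![p.2, p.2])
      (Ω ×ˢ (Set.univ : Set (EuclideanSpace ℂ (Fin n)))) :=
    h1'.eval harg1.continuousOn
  have e2 : ContinuousOn (fun p : EuclideanSpace ℂ (Fin n) × EuclideanSpace ℂ (Fin n) =>
      iteratedFDerivWithin ℝ 2 u Ω p.1 ![Complex.I • p.2, Complex.I • p.2])
      (Ω ×ˢ (Set.univ : Set (EuclideanSpace ℂ (Fin n)))) :=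
    h1'.eval (harg Complex.I).continuousOn
  exact (e1.add e2).div_const 4

private lemma leviForm_sub_mul {n : ℕ} {U : Set (EuclideanSpace ℂ (Fin n))}
    (hUopen : IsOpen U) {ρ χ : EuclideanSpace ℂ (Fin n) → ℝ}
    (hρ : ContDiffOn ℝ 2 ρ U) (hχ : ContDiffOn ℝ 2 χ U) (ε : ℝ)
    {z : EuclideanSpace ℂ (Fin n)} (hz : z ∈ U) (ξ : EuclideanSpace ℂ (Fin n)) :
    leviForm (fun w => ρ w - ε * χ w) U z ξ
      = leviForm ρ U z ξ - ε * leviForm χ U z ξ := by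
  have h2 := iteratedFDerivWithin_const_smul_apply (a := -ε) (f := χ)
    (hχ z hz) hUopen.uniqueDiffOn hz
  have h1 := iteratedFDerivWithin_add_apply' (f := ρ) (g := (-ε) • χ)
    (hρ z hz) ((hχ.const_smul (-ε)) z hz) hUopen.uniqueDiffOn hz
  have heq : (fun w => ρ w - ε * χ w) = fun w => ρ w + ((-ε) • χ) w := by
    funext w
    simp only [Pi.smul_apply, smul_eq_mul]
    ring
  have hit : iteratedFDerivWithin ℝ 2 (fun w => ρ w - ε * χ w) U z
      = iteratedFDerivWithin ℝ 2 ρ U z + (-ε) • iteratedFDerivWithin ℝ 2 χ U z := by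
    rw [heq, h1, h2]
  unfold leviForm
  rw [hit]
  simp only [ContinuousMultilinearMap.add_apply, ContinuousMultilinearMap.smul_apply,
    smul_eq_mul]
  ring

end Aux

set_option maxHeartbeats 1000000 in
/-- The strictly plurisubharmonic analogue of Lemma 2.7: enlarging a strictly
pseudoconvex sublevel set `D = {ρ < 0}` across a compact part `L` of its boundary. -/
theorem enlarge_strictly_psh_domain
    {n : ℕ} (U : Set (EuclideanSpace ℂ (Fin n))) (hUopen : IsOpen U)
    (hUbdd : Bornology.IsBounded U)
    (ρ : EuclideanSpace ℂ (Fin n) → ℝ) (hρ : ContDiffOn ℝ 2 ρ U)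
    (hlevi : ∀ z ∈ U, ∀ ξ : EuclideanSpace ℂ (Fin n), ξ ≠ 0 → 0 < leviForm ρ U z ξ)
    (hdρ : ∀ z ∈ U, fderivWithin ℝ ρ U z ≠ 0)
    (D : Set (EuclideanSpace ℂ (Fin n))) (hD : D = {z ∈ U | ρ z < 0})
    (hbdry : frontier D ∩ U = {z ∈ U | ρ z = 0})
    (L : Set (EuclideanSpace ℂ (Fin n))) (hL : IsCompact L) (hLsub : L ⊆ frontier D ∩ U)
    (UL : Set (EuclideanSpace ℂ (Fin n))) (hUL : IsOpen UL) (hLUL : L ⊆ UL) (hULU : UL ⊆ U) :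
    ∃ ρtil : EuclideanSpace ℂ (Fin n) → ℝ,
      ContDiffOn ℝ 2 ρtil U ∧
      (∀ z ∈ U, ρtil z ≤ ρ z) ∧
      (∀ z ∈ U, ∀ ξ : EuclideanSpace ℂ (Fin n), ξ ≠ 0 → 0 < leviForm ρtil U z ξ) ∧
      D ∪ L ⊆ {z ∈ U | ρtil z < 0} ∧
      {z ∈ U | ρtil z < 0} ⊆ D ∪ UL ∧
      (∀ z ∈ frontier {z ∈ U | ρtil z < 0} ∩ U, fderivWithin ℝ ρtil U z ≠ 0) := by
  classical
  rcases Set.eq_empty_or_nonempty L with hLe | hLne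
  · subst hLe
    refine ⟨ρ, hρ, fun z _ => le_refl _, hlevi, ?_, ?_, ?_⟩
    · rw [Set.union_empty, hD]
    · intro z hz; left; rw [hD]; exact hz
    · intro z hz; exact hdρ z hz.2
  -- main case
  have hLU : L ⊆ U := fun z hz => (hLsub hz).2
  obtain ⟨K, hKc, hLK, hKUL⟩ := exists_compact_between hL hUL hLUL
  obtain ⟨χ, hχsupp, hχsm, hχrange⟩ := isOpen_interior.exists_contDiff_support_eq (n := 2) (s := interior K)
  have hχ0 : ∀ x, 0 ≤ χ x := fun x => (hχrange (Set.mem_range_self x)).1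
  have hχ2 : ContDiff ℝ 2 χ := hχsm.of_le (by norm_cast)
  have hχ2U : ContDiffOn ℝ 2 χ U := hχ2.contDiffOn
  have htsK : tsupport χ ⊆ K := by
    rw [tsupport, hχsupp]
    exact closure_minimal interior_subset hKc.isClosed
  have htsUL : tsupport χ ⊆ UL := htsK.trans hKUL
  have htsU : tsupport χ ⊆ U := htsUL.trans hULU
  have htsc : IsCompact (tsupport χ) := hKc.of_isClosed_subset isClosed_closure htsK
  -- nontriviality
  obtain ⟨z0, hz0L⟩ := hLne
  have hz0U : z0 ∈ U := hLU hz0L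
  have hnt : Nontrivial (EuclideanSpace ℂ (Fin n)) := by
    by_contra h
    rw [not_nontrivial_iff_subsingleton] at h
    apply hdρ z0 hz0U
    ext x
    have : x = 0 := Subsingleton.elim _ _
    rw [this]; simp
  have hSphne : (Metric.sphere (0 : EuclideanSpace ℂ (Fin n)) 1).Nonempty :=
    NormedSpace.sphere_nonempty.mpr (by norm_num)
  -- compact sets for extrema
  set S : Set (EuclideanSpace ℂ (Fin n) × EuclideanSpace ℂ (Fin n)) := tsupport χ ×ˢ Metric.sphere (0 : EuclideanSpace ℂ (Fin n)) 1 with hS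
  have hz0ts : z0 ∈ tsupport χ := subset_closure (by rw [hχsupp]; exact hLK hz0L)
  have hSc : IsCompact S := htsc.prod (isCompact_sphere 0 1)
  have hSne : S.Nonempty := ⟨(z0, hSphne.choose), ⟨hz0ts, hSphne.choose_spec⟩⟩
  have hSsub : S ⊆ U ×ˢ (Set.univ : Set (EuclideanSpace ℂ (Fin n))) := fun p hp => ⟨htsU hp.1, trivial⟩
  -- min of Levi form of ρ on S
  obtain ⟨m, hm, hmmin⟩ : ∃ m : ℝ, 0 < m ∧
      ∀ p ∈ S, m ≤ leviForm ρ U p.1 p.2 := by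
    obtain ⟨p1, hp1S, hp1min⟩ := hSc.exists_isMinOn hSne
      ((leviForm_continuousOn hUopen hρ).mono hSsub)
    have hp1ξ : p1.2 ≠ 0 := by
      have h := mem_sphere_zero_iff_norm.mp hp1S.2
      intro hh; rw [hh] at h; simp at h
    exact ⟨_, hlevi p1.1 (htsU hp1S.1) p1.2 hp1ξ, fun p hp => hp1min hp⟩
  -- max of |Levi form of χ| on S
  obtain ⟨Ml, hMl0, hMlmax⟩ : ∃ Ml : ℝ, 0 ≤ Ml ∧
      ∀ p ∈ S, |leviForm χ U p.1 p.2| ≤ Ml := by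
    obtain ⟨p2, hp2S, hp2max⟩ := hSc.exists_isMaxOn hSne
      (((leviForm_continuousOn hUopen hχ2U).mono hSsub).abs)
    exact ⟨_, abs_nonneg _, fun p hp => hp2max hp⟩
  -- min of ‖fderiv ρ‖ on tsupport χ
  obtain ⟨c, hc, hcmin⟩ : ∃ c : ℝ, 0 < c ∧
      ∀ z ∈ tsupport χ, c ≤ ‖fderiv ℝ ρ z‖ := by
    have hfc : ContinuousOn (fun z => ‖fderiv ℝ ρ z‖) U :=
      (hρ.continuousOn_fderiv_of_isOpen hUopen (by norm_num)).norm
    obtain ⟨z1, hz1K, hz1min⟩ := htsc.exists_isMinOn ⟨z0, hz0ts⟩ (hfc.mono htsU)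
    refine ⟨‖fderiv ℝ ρ z1‖, ?_, fun z hz => hz1min hz⟩
    rw [← fderivWithin_of_isOpen hUopen (htsU hz1K)]
    exact norm_pos_iff.mpr (hdρ z1 (htsU hz1K))
  -- max of ‖fderiv χ‖ on tsupport χ
  obtain ⟨Md, hMd0, hMdmax⟩ : ∃ Md : ℝ, 0 ≤ Md ∧
      ∀ z ∈ tsupport χ, ‖fderiv ℝ χ z‖ ≤ Md := by
    have hfχc : Continuous (fun z => ‖fderiv ℝ χ z‖) :=
      (hχ2.fderiv_right (m := 1) (by norm_num)).continuous.norm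
    obtain ⟨z2, hz2K, hz2max⟩ := htsc.exists_isMaxOn ⟨z0, hz0ts⟩ hfχc.continuousOn
    exact ⟨_, norm_nonneg _, fun z hz => hz2max hz⟩
  -- choose ε
  obtain ⟨ε, hε, hεm, hεc⟩ : ∃ ε : ℝ, 0 < ε ∧ ε * Ml < m ∧ ε * Md < c := by
    refine ⟨min (m / (2 * (Ml + 1))) (c / (2 * (Md + 1))),
      lt_min (by positivity) (by positivity), ?_, ?_⟩
    · have h1 : min (m / (2 * (Ml + 1))) (c / (2 * (Md + 1))) ≤ m / (2 * (Ml + 1)) :=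
        min_le_left _ _
      have h2 : min (m / (2 * (Ml + 1))) (c / (2 * (Md + 1))) * Ml
          ≤ (m / (2 * (Ml + 1))) * Ml := mul_le_mul_of_nonneg_right h1 hMl0
      have h3 : (m / (2 * (Ml + 1))) * Ml < m := by
        rw [div_mul_eq_mul_div, div_lt_iff₀ (by positivity)]
        nlinarith
      linarith
    · have h1 : min (m / (2 * (Ml + 1))) (c / (2 * (Md + 1))) ≤ c / (2 * (Md + 1)) :=
        min_le_right _ _
      have h2 : min (m / (2 * (Ml + 1))) (c / (2 * (Md + 1))) * Md
          ≤ (c / (2 * (Md + 1))) * Md := mul_le_mul_of_nonneg_right h1 hMd0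
      have h3 : (c / (2 * (Md + 1))) * Md < c := by
        rw [div_mul_eq_mul_div, div_lt_iff₀ (by positivity)]
        nlinarith
      linarith
  -- the new function
  set ρtil : EuclideanSpace ℂ (Fin n) → ℝ := fun z => ρ z - ε * χ z with hρtil_def
  have hρtilCD : ContDiffOn ℝ 2 ρtil U := hρ.sub (contDiffOn_const.mul hχ2U)
  -- linearity of Levi form
  have hlin : ∀ z ∈ U, ∀ ξ : EuclideanSpace ℂ (Fin n),
      leviForm ρtil U z ξ = leviForm ρ U z ξ - ε * leviForm χ U z ξ :=
    fun z hz ξ => leviForm_sub_mul hUopen hρ hχ2U ε hz ξ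
  -- Levi form of χ vanishes off tsupport χ
  have hχlevi0 : ∀ z ∈ U, z ∉ tsupport χ → ∀ ξ : EuclideanSpace ℂ (Fin n), leviForm χ U z ξ = 0 := by
    intro z hz hzn ξ
    have h0 : iteratedFDerivWithin ℝ 2 χ U z = 0 := by
      rw [iteratedFDerivWithin_of_isOpen 2 hUopen hz]
      by_contra h
      exact hzn (support_iteratedFDeriv_subset 2 (Function.mem_support.mpr h))
    unfold leviForm
    rw [h0]
    simp
  refine ⟨ρtil, hρtilCD, ?_, ?_, ?_, ?_, ?_⟩
  · intro z _
    have := mul_nonneg hε.le (hχ0 z)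
    simp [hρtil_def]; linarith
  · -- Levi positivity
    intro z hz ξ hξ
    rw [hlin z hz ξ]
    by_cases hzt : z ∈ tsupport χ
    · obtain ⟨r, hr0, ξ', hξ's, hξeq⟩ : ∃ r : ℝ, 0 < r ∧
          ∃ ξ'' : EuclideanSpace ℂ (Fin n),
            ξ'' ∈ Metric.sphere (0 : EuclideanSpace ℂ (Fin n)) 1 ∧ ξ = r • ξ'' := by
        have hn : (0:ℝ) < ‖ξ‖ := norm_pos_iff.mpr hξ
        refine ⟨‖ξ‖, hn, ‖ξ‖⁻¹ • ξ, ?_, ?_⟩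
        · rw [mem_sphere_zero_iff_norm, norm_smul, norm_inv, Real.norm_eq_abs,
            abs_of_pos hn]
          exact inv_mul_cancel₀ hn.ne'
        · rw [smul_smul, mul_inv_cancel₀ hn.ne', one_smul]
      have hpS : (z, ξ') ∈ S := ⟨hzt, hξ's⟩
      have hA : m ≤ leviForm ρ U z ξ' := hmmin (z, ξ') hpS
      have hB : |leviForm χ U z ξ'| ≤ Ml := hMlmax (z, ξ') hpS
      have hBpos : ε * leviForm χ U z ξ' < m := by
        have : ε * leviForm χ U z ξ' ≤ ε * |leviForm χ U z ξ'| :=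
          mul_le_mul_of_nonneg_left (le_abs_self _) hε.le
        have h2 : ε * |leviForm χ U z ξ'| ≤ ε * Ml := mul_le_mul_of_nonneg_left hB hε.le
        linarith
      have hfin : 0 < r ^ 2 * (leviForm ρ U z ξ' - ε * leviForm χ U z ξ') :=
        mul_pos (pow_pos hr0 2) (by linarith)
      have hgoal : r ^ 2 * leviForm ρ U z ξ' - ε * (r ^ 2 * leviForm χ U z ξ')
          = r ^ 2 * (leviForm ρ U z ξ' - ε * leviForm χ U z ξ') := by ring
      rw [hξeq, leviForm_real_smul, leviForm_real_smul, hgoal]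
      exact hfin
    · rw [hχlevi0 z hz hzt ξ]
      simpa using hlevi z hz ξ hξ
  · -- D ∪ L ⊆ new domain
    intro z hz
    rcases hz with hzD | hzL
    · rw [hD] at hzD
      refine ⟨hzD.1, ?_⟩
      have := mul_nonneg hε.le (hχ0 z)
      simp only [hρtil_def]
      linarith [hzD.2]
    · have hzU : z ∈ U := hLU hzL
      have hρz : ρ z = 0 := (hbdry ▸ hLsub hzL).2
      have hχz : 0 < χ z := by
        have : z ∈ Function.support χ := by rw [hχsupp]; exact hLK hzL
        exact lt_of_le_of_ne (hχ0 z) (Ne.symm (Function.mem_support.mp this))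
      refine ⟨hzU, ?_⟩
      simp only [hρtil_def]
      rw [hρz]
      simpa using mul_pos hε hχz
  · -- new domain ⊆ D ∪ UL
    rintro z ⟨hzU, hzlt⟩
    by_cases hρz : ρ z < 0
    · left; rw [hD]; exact ⟨hzU, hρz⟩
    · right
      push_neg at hρz
      have : 0 < ε * χ z := by simp only [hρtil_def] at hzlt; linarith
      have hχz : χ z ≠ 0 := by
        intro h; rw [h] at this; simp at this
      have : z ∈ Function.support χ := Function.mem_support.mpr hχz
      rw [hχsupp] at this
      exact hKUL (interior_subset this)
  · -- nonvanishing gradient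
    intro z hz
    have hzU : z ∈ U := hz.2
    have hρdiff : DifferentiableAt ℝ ρ z :=
      (hρ.differentiableOn (by norm_num)).differentiableAt (hUopen.mem_nhds hzU)
    have hχdiff : DifferentiableAt ℝ χ z := (hχ2.differentiable (by norm_num)).differentiableAt
    have hfd : fderivWithin ℝ ρtil U z = fderiv ℝ ρ z - ε • fderiv ℝ χ z := by
      rw [fderivWithin_of_isOpen hUopen hzU]
      simp only [hρtil_def]
      rw [fderiv_fun_sub hρdiff (hχdiff.const_mul ε), fderiv_const_mul hχdiff ε]
    rw [hfd]
    by_cases hzt : z ∈ tsupport χ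
    · intro h0
      have heq : fderiv ℝ ρ z = ε • fderiv ℝ χ z := sub_eq_zero.mp h0
      have h1 : c ≤ ‖fderiv ℝ ρ z‖ := hcmin z hzt
      have h2 : ‖fderiv ℝ χ z‖ ≤ Md := hMdmax z hzt
      have h3 : ‖ε • fderiv ℝ χ z‖ = ε * ‖fderiv ℝ χ z‖ := by
        rw [norm_smul, Real.norm_eq_abs, abs_of_pos hε]
      have h4 : ε * ‖fderiv ℝ χ z‖ ≤ ε * Md := mul_le_mul_of_nonneg_left h2 hε.le
      rw [heq, h3] at h1
      linarith
    · have h0 : fderiv ℝ χ z = 0 := by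
        by_contra h
        exact hzt (support_fderiv_subset (𝕜 := ℝ) (Function.mem_support.mpr h))
      rw [h0, smul_zero, sub_zero, ← fderivWithin_of_isOpen hUopen hzU]
      exact hdρ z hzU
end
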